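/- arXiv:2603.24617 — 2 statements merged into one kernel-verified Lean document; each statement's English description precedes it below -/
import Mathlib

section
/- Assume pairwise identifiability and uniform boundedness with constant B. Then there exist δ∈(0,1/2) and n_cen∈ℕ such that for all distinct y,y'∈𝒴 and all query plans r with effective sample size n_{y,y'}(r) ≥ n_cen: every minimizer s* of the map s ↦ log P̄_{y,y'}(r;s) over [0,1] lies in [δ, 1−δ] and satisfies E_{ℚ_{y,y',r,s*}}[Δ_{y,y'}(r)] = 0. -/
open Finset Set
open scoped Classical BigOperators ENNReal

namespace MultiLLM

noncomputable section

variable {L K : ℕ}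

/-- The observation space for a query plan `r`: model `m` is queried `r m` times. -/
abbrev Obs (𝒳 : Fin K → Type) (r : Fin K → ℕ) := ∀ m : Fin K, Fin (r m) → 𝒳 m

variable {𝒳 : Fin K → Type} [∀ m, Fintype (𝒳 m)]

/-- Conditional likelihood of an observation vector given `Y = y`. -/
def prodLik (p : ∀ m : Fin K, 𝒳 m → Fin L → ℝ) (r : Fin K → ℕ) (y : Fin L)
    (x : Obs 𝒳 r) : ℝ :=
  ∏ m, ∏ t, p m (x m t) y

/-- MAP score of label `y` at observation `x`. -/
def score (π : Fin L → ℝ) (p : ∀ m : Fin K, 𝒳 m → Fin L → ℝ) (r : Fin K → ℕ)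
    (y : Fin L) (x : Obs 𝒳 r) : ℝ :=
  π y * prodLik p r y x

/-- Conditional probability of an event `E` given `Y = y`. -/
def condProb (p : ∀ m : Fin K, 𝒳 m → Fin L → ℝ) (r : Fin K → ℕ) (y : Fin L)
    (E : Set (Obs 𝒳 r)) : ℝ :=
  ∑ x : Obs 𝒳 r, E.indicator (prodLik p r y) x

/-- `Yhat` is a MAP estimator for plan `r`. -/
def IsMAP (π : Fin L → ℝ) (p : ∀ m : Fin K, 𝒳 m → Fin L → ℝ) (r : Fin K → ℕ)
    (Yhat : Obs 𝒳 r → Fin L) : Prop :=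
  ∀ x : Obs 𝒳 r, ∀ y : Fin L, score π p r y x ≤ score π p r (Yhat x) x

/-- Statewise error probability of estimator `Yhat` when the truth is `y`. -/
def Pe (p : ∀ m : Fin K, 𝒳 m → Fin L → ℝ) (r : Fin K → ℕ) (y : Fin L)
    (Yhat : Obs 𝒳 r → Fin L) : ℝ :=
  condProb p r y {x | Yhat x ≠ y}

/-- Log-likelihood difference between competing label `y'` and true label `y`. -/
def LLdiff (π : Fin L → ℝ) (p : ∀ m : Fin K, 𝒳 m → Fin L → ℝ) (r : Fin K → ℕ)
    (y y' : Fin L) (x : Obs 𝒳 r) : ℝ :=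
  Real.log (π y' / π y) + ∑ m, ∑ t, Real.log (p m (x m t) y' / p m (x m t) y)

/-- Chernoff affinity factor `M_m^{(y,y')}(s)`. -/
def chernoffM (p : ∀ m : Fin K, 𝒳 m → Fin L → ℝ) (m : Fin K) (y y' : Fin L)
    (s : ℝ) : ℝ :=
  ∑ x : 𝒳 m, p m x y ^ (1 - s) * p m x y' ^ s

/-- Pairwise Chernoff proxy `P̄_{y,y'}(r; s)`. -/
def proxy (π : Fin L → ℝ) (p : ∀ m : Fin K, 𝒳 m → Fin L → ℝ) (r : Fin K → ℕ)
    (y y' : Fin L) (s : ℝ) : ℝ :=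
  (π y' / π y) ^ s * ∏ m, chernoffM p m y y' s ^ r m

/-- Optimized pairwise Chernoff proxy `P̄_{y,y'}(r) = min_{s ∈ [0,1]} P̄_{y,y'}(r; s)`. -/
def proxyOpt (π : Fin L → ℝ) (p : ∀ m : Fin K, 𝒳 m → Fin L → ℝ) (r : Fin K → ℕ)
    (y y' : Fin L) : ℝ :=
  sInf ((fun s => proxy π p r y y' s) '' Set.Icc (0 : ℝ) 1)

/-- Surrogate statewise error bound `P̄_e(y; r)`. -/
def PeBar (π : Fin L → ℝ) (p : ∀ m : Fin K, 𝒳 m → Fin L → ℝ) (r : Fin K → ℕ)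
    (y : Fin L) : ℝ :=
  ∑ y' ∈ Finset.univ.filter (fun y' => y' ≠ y), proxyOpt π p r y y'

/-- Total cost of a query plan. -/
def cost (c : Fin K → ℝ) (r : Fin K → ℕ) : ℝ := ∑ m, c m * (r m : ℝ)

/-- Effective sample size `n_{y,y'}(r)`: total queries to models distinguishing `y,y'`. -/
def effSample (p : ∀ m : Fin K, 𝒳 m → Fin L → ℝ) (r : Fin K → ℕ) (y y' : Fin L) : ℕ :=
  ∑ m ∈ Finset.univ.filter (fun m => (fun x => p m x y) ≠ (fun x => p m x y')), r m

/-- Tilted per-symbol distribution `q_m^{(y,y')}(x; s)`. -/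
def qTilt (p : ∀ m : Fin K, 𝒳 m → Fin L → ℝ) (m : Fin K) (y y' : Fin L) (s : ℝ)
    (x : 𝒳 m) : ℝ :=
  p m x y ^ (1 - s) * p m x y' ^ s / chernoffM p m y y' s

/-- Weight of an observation under the tilted product measure `ℚ_{y,y',r,s}`. -/
def Qweight (p : ∀ m : Fin K, 𝒳 m → Fin L → ℝ) (r : Fin K → ℕ) (y y' : Fin L)
    (s : ℝ) (x : Obs 𝒳 r) : ℝ :=
  ∏ m, ∏ t, qTilt p m y y' s (x m t)

/-- Expectation under the tilted product measure `ℚ_{y,y',r,s}`. -/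
def Qexp (p : ∀ m : Fin K, 𝒳 m → Fin L → ℝ) (r : Fin K → ℕ) (y y' : Fin L)
    (s : ℝ) (f : Obs 𝒳 r → ℝ) : ℝ :=
  ∑ x : Obs 𝒳 r, Qweight p r y y' s x * f x

/-- Probability of an event under the tilted product measure `ℚ_{y,y',r,s}`. -/
def Qprob (p : ∀ m : Fin K, 𝒳 m → Fin L → ℝ) (r : Fin K → ℕ) (y y' : Fin L)
    (s : ℝ) (E : Set (Obs 𝒳 r)) : ℝ :=
  ∑ x : Obs 𝒳 r, E.indicator (Qweight p r y y' s) x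

/-- Variance under the tilted product measure `ℚ_{y,y',r,s}`. -/
def Qvar (p : ∀ m : Fin K, 𝒳 m → Fin L → ℝ) (r : Fin K → ℕ) (y y' : Fin L)
    (s : ℝ) (f : Obs 𝒳 r → ℝ) : ℝ :=
  Qexp p r y y' s (fun x => (f x - Qexp p r y y' s f) ^ 2)

/-- True feasible set `ℛ(α)` (with MAP estimator family `Yhat`). -/
def RtrueSet (p : ∀ m : Fin K, 𝒳 m → Fin L → ℝ)
    (Yhat : ∀ r : Fin K → ℕ, Obs 𝒳 r → Fin L) (α : Fin L → ℝ) : Set (Fin K → ℕ) :=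
  {r | ∀ y, Pe p r y (Yhat r) ≤ α y}

/-- Surrogate feasible set `ℛ̄(α)`. -/
def RbarSet (π : Fin L → ℝ) (p : ∀ m : Fin K, 𝒳 m → Fin L → ℝ)
    (α : Fin L → ℝ) : Set (Fin K → ℕ) :=
  {r | ∀ y, PeBar π p r y ≤ α y}

/-- True optimal cost `OPT(α)` (with `+∞` for the empty feasible set). -/
def OPTtrue (p : ∀ m : Fin K, 𝒳 m → Fin L → ℝ)
    (Yhat : ∀ r : Fin K → ℕ, Obs 𝒳 r → Fin L) (c : Fin K → ℝ) (α : Fin L → ℝ) : ℝ≥0∞ :=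
  ⨅ r ∈ RtrueSet p Yhat α, ENNReal.ofReal (cost c r)

/-- Surrogate optimal cost `OPT̄(α)` (with `+∞` for the empty feasible set). -/
def OPTbar (π : Fin L → ℝ) (p : ∀ m : Fin K, 𝒳 m → Fin L → ℝ)
    (c : Fin K → ℝ) (α : Fin L → ℝ) : ℝ≥0∞ :=
  ⨅ r ∈ RbarSet π p α, ENNReal.ofReal (cost c r)

/-!
Write `ℓ_m = log (p_m(·|y') / p_m(·|y))` and `μ_m(s)` for the mean of `ℓ_m` under the tilted law
`q_m(·; s)`. Since `M_m(s) = ∑ₓ p_m(x|y) e^{s ℓ_m(x)}`, the derivative of `log P̄(r; s)` is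
`log (π y' / π y) + ∑ r_m μ_m(s)`. For a model distinguishing `y` from `y'`, Gibbs' inequality
gives `μ_m(0) = -KL(p_m(·|y) ‖ p_m(·|y')) < 0` and `μ_m(1) = KL(p_m(·|y') ‖ p_m(·|y)) > 0`, and
by continuity and finiteness there are uniform `κ, δ > 0` with `μ_m ≤ -κ` on `[0, δ]` and
`μ_m ≥ κ` on `[1 - δ, 1]`. Once `κ n_{y,y'}(r)` exceeds the prior log-odds, the derivative is
negative on `[0, δ]` and positive on `[1 - δ, 1]`, so every minimizer lies in `[δ, 1 - δ]` and is
a critical point. Finally `P̄(r; s) = ∑ₓ P(x|y) e^{s Δ(x)}`, whose logarithmic derivative is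
`E_ℚ[Δ]`: the critical-point equation is the centering identity.
-/

open Filter Topology

section ExpTilt

variable {α : Type*} [Fintype α]

theorem sum_mul_log_div_lt_zero {u v : α → ℝ} (hu : ∀ a, 0 < u a) (hv : ∀ a, 0 < v a)
    (hsum : ∑ a, u a = ∑ a, v a) (hne : u ≠ v) : ∑ a, u a * Real.log (v a / u a) < 0 := by
  have hsub : ∀ a, u a * (v a / u a - 1) = v a - u a := fun a => by field_simp [(hu a).ne']
  obtain ⟨a, ha⟩ := Function.ne_iff.mp hne
  calc ∑ a, u a * Real.log (v a / u a) < ∑ a, (v a - u a) := by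
        refine Finset.sum_lt_sum (fun b _ => ?_) ⟨a, Finset.mem_univ a, ?_⟩
        · rw [← hsub]
          exact mul_le_mul_of_nonneg_left (Real.log_le_sub_one_of_pos (div_pos (hv b) (hu b)))
            (hu b).le
        · rw [← hsub]
          refine mul_lt_mul_of_pos_left (Real.log_lt_sub_one_of_pos (div_pos (hv a) (hu a)) ?_)
            (hu a)
          rw [Ne, div_eq_one_iff_eq (hu a).ne']
          exact Ne.symm ha
    _ = 0 := by rw [Finset.sum_sub_distrib, hsum, sub_self]

theorem rpow_one_sub_mul_rpow_eq {a b : ℝ} (ha : 0 < a) (hb : 0 < b) (s : ℝ) :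
    a ^ (1 - s) * b ^ s = a * Real.exp (s * Real.log (b / a)) := by
  rw [mul_comm s, ← Real.rpow_def_of_pos (div_pos hb ha), Real.div_rpow hb.le ha.le,
    Real.rpow_sub ha, Real.rpow_one]
  field_simp

theorem nonempty_of_sum_eq_one {f : α → ℝ} (hf : ∑ a, f a = 1) : Nonempty α :=
  (Finset.nonempty_of_sum_ne_zero (hf ▸ one_ne_zero)).to_type

def expTiltMean (w f : α → ℝ) (s : ℝ) : ℝ :=
  (∑ a, w a * Real.exp (s * f a) * f a) / ∑ a, w a * Real.exp (s * f a)

theorem sum_mul_exp_pos [Nonempty α] {w : α → ℝ} (hw : ∀ a, 0 < w a) (f : α → ℝ) (s : ℝ) :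
    0 < ∑ a, w a * Real.exp (s * f a) :=
  Finset.sum_pos (fun a _ => mul_pos (hw a) (Real.exp_pos _)) Finset.univ_nonempty

theorem hasDerivAt_log_sum_mul_exp [Nonempty α] {w : α → ℝ} (hw : ∀ a, 0 < w a) (f : α → ℝ)
    (s : ℝ) :
    HasDerivAt (fun u => Real.log (∑ a, w a * Real.exp (u * f a))) (expTiltMean w f s) s := by
  have hsum : HasDerivAt (fun u => ∑ a, w a * Real.exp (u * f a))
      (∑ a, w a * Real.exp (s * f a) * f a) s := by
    refine HasDerivAt.fun_sum fun a _ => ?_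
    simpa [mul_assoc] using ((hasDerivAt_mul_const (f a)).exp).const_mul (w a)
  exact hsum.log (sum_mul_exp_pos hw f s).ne'

theorem continuous_expTiltMean [Nonempty α] {w : α → ℝ} (hw : ∀ a, 0 < w a) (f : α → ℝ) :
    Continuous (expTiltMean w f) :=
  Continuous.div (by fun_prop) (by fun_prop) fun s => (sum_mul_exp_pos hw f s).ne'

theorem expTiltMean_zero {w : α → ℝ} (hw : ∑ a, w a = 1) (f : α → ℝ) :
    expTiltMean w f 0 = ∑ a, w a * f a := by
  simp [expTiltMean, hw]

end ExpTilt

theorem _root_.IsMinOn.mem_Icc_and_eq_zero_of_hasDerivAt {g g' : ℝ → ℝ} {a b c d s : ℝ}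
    (hg : ∀ x, HasDerivAt g (g' x) x) (hac : a < c) (hcd : c ≤ d) (hdb : d < b)
    (hneg : ∀ x ∈ Icc a c, g' x < 0) (hpos : ∀ x ∈ Icc d b, 0 < g' x) (hs : s ∈ Icc a b)
    (hmin : IsMinOn g (Icc a b) s) : s ∈ Icc c d ∧ g' s = 0 := by
  have hcont : Continuous g := continuous_iff_continuousAt.2 fun x => (hg x).continuousAt
  have hanti : StrictAntiOn g (Icc a c) :=
    strictAntiOn_of_hasDerivWithinAt_neg (convex_Icc a c) hcont.continuousOn
      (fun x _ => (hg x).hasDerivWithinAt) fun x hx => hneg x (interior_subset hx)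
  have hmono : StrictMonoOn g (Icc d b) :=
    strictMonoOn_of_hasDerivWithinAt_pos (convex_Icc d b) hcont.continuousOn
      (fun x _ => (hg x).hasDerivWithinAt) fun x hx => hpos x (interior_subset hx)
  have hcs : c ≤ s := by
    by_contra! h
    exact (hanti ⟨hs.1, h.le⟩ ⟨hac.le, le_rfl⟩ h).not_ge (hmin ⟨hac.le, hcd.trans hdb.le⟩)
  have hsd : s ≤ d := by
    by_contra! h
    exact (hmono ⟨le_rfl, hdb.le⟩ ⟨h.le, hs.2⟩ h).not_ge (hmin ⟨hac.le.trans hcd, hdb.le⟩)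
  refine ⟨⟨hcs, hsd⟩, ?_⟩
  exact (hmin.isLocalMin (Icc_mem_nhds (hac.trans_le hcs) (hsd.trans_lt hdb))).hasDerivAt_eq_zero
    (hg s)

theorem sum_obs_prod_prod (r : Fin K → ℕ) (G : ∀ m, 𝒳 m → ℝ) :
    ∑ x : Obs 𝒳 r, ∏ m, ∏ t, G m (x m t) = ∏ m, (∑ v, G m v) ^ r m := by
  rw [← Fintype.prod_sum (fun m (ξ : Fin (r m) → 𝒳 m) => ∏ t, G m (ξ t))]
  refine Finset.prod_congr rfl fun m _ => ?_
  rw [← Fintype.prod_sum (fun (_ : Fin (r m)) v => G m v), Finset.prod_const, Finset.card_univ,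
    Fintype.card_fin]

section Model

variable {p : ∀ m : Fin K, 𝒳 m → Fin L → ℝ}

def llr (p : ∀ m : Fin K, 𝒳 m → Fin L → ℝ) (m : Fin K) (y y' : Fin L) (x : 𝒳 m) : ℝ :=
  Real.log (p m x y' / p m x y)

theorem chernoffM_eq_sum_mul_exp (hp : ∀ m x y, 0 < p m x y) (m : Fin K) (y y' : Fin L)
    (s : ℝ) : chernoffM p m y y' s = ∑ x, p m x y * Real.exp (s * llr p m y y' x) :=
  Finset.sum_congr rfl fun x _ => rpow_one_sub_mul_rpow_eq (hp m x y) (hp m x y') s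

theorem chernoffM_pos [∀ m, Nonempty (𝒳 m)] (hp : ∀ m x y, 0 < p m x y) (m : Fin K)
    (y y' : Fin L) (s : ℝ) : 0 < chernoffM p m y y' s := by
  rw [chernoffM_eq_sum_mul_exp hp]
  exact sum_mul_exp_pos (fun x => hp m x y) _ s

theorem log_proxy_eq [∀ m, Nonempty (𝒳 m)] {π : Fin L → ℝ} (hπ : ∀ y, 0 < π y)
    (hp : ∀ m x y, 0 < p m x y) (r : Fin K → ℕ) (y y' : Fin L) (s : ℝ) :
    Real.log (proxy π p r y y' s) =
      s * Real.log (π y' / π y) + ∑ m, r m * Real.log (chernoffM p m y y' s) := by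
  have hratio : 0 < π y' / π y := div_pos (hπ y') (hπ y)
  have hpow : ∀ m, 0 < chernoffM p m y y' s ^ r m := fun m => pow_pos (chernoffM_pos hp m y y' s) _
  rw [proxy, Real.log_mul (Real.rpow_pos_of_pos hratio s).ne'
      (Finset.prod_pos fun m _ => hpow m).ne', Real.log_rpow hratio,
    Real.log_prod fun m _ => (hpow m).ne']
  simp only [Real.log_pow]

def logProxySlope (π : Fin L → ℝ) (p : ∀ m : Fin K, 𝒳 m → Fin L → ℝ) (r : Fin K → ℕ)
    (y y' : Fin L) (s : ℝ) : ℝ :=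
  Real.log (π y' / π y) + ∑ m, r m * expTiltMean (fun x => p m x y) (llr p m y y') s

theorem hasDerivAt_log_proxy [∀ m, Nonempty (𝒳 m)] {π : Fin L → ℝ} (hπ : ∀ y, 0 < π y)
    (hp : ∀ m x y, 0 < p m x y) (r : Fin K → ℕ) (y y' : Fin L) (s : ℝ) :
    HasDerivAt (fun u => Real.log (proxy π p r y y' u)) (logProxySlope π p r y y' s) s := by
  simp only [log_proxy_eq hπ hp, chernoffM_eq_sum_mul_exp hp]
  refine (hasDerivAt_mul_const _).add (HasDerivAt.fun_sum fun m _ => ?_)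
  exact (hasDerivAt_log_sum_mul_exp (fun x => hp m x y) _ s).const_mul _

set_option linter.unusedSectionVars false in
theorem prodLik_mul_exp_LLdiff {π : Fin L → ℝ} (hπ : ∀ y, 0 < π y) (r : Fin K → ℕ)
    (y y' : Fin L) (s : ℝ) (x : Obs 𝒳 r) :
    prodLik p r y x * Real.exp (s * LLdiff π p r y y' x) =
      (π y' / π y) ^ s * ∏ m, ∏ t, p m (x m t) y * Real.exp (s * llr p m y y' (x m t)) := by
  simp only [LLdiff, llr, mul_add, Finset.mul_sum, Real.exp_add, Real.exp_sum, prodLik,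
    Finset.prod_mul_distrib, Real.rpow_def_of_pos (div_pos (hπ y') (hπ y))]
  rw [mul_comm (Real.log (π y' / π y)) s]
  ring

theorem proxy_eq_sum_prodLik_mul_exp {π : Fin L → ℝ} (hπ : ∀ y, 0 < π y)
    (hp : ∀ m x y, 0 < p m x y) (r : Fin K → ℕ) (y y' : Fin L) (s : ℝ) :
    proxy π p r y y' s = ∑ x, prodLik p r y x * Real.exp (s * LLdiff π p r y y' x) := by
  simp only [prodLik_mul_exp_LLdiff hπ, ← Finset.mul_sum, proxy, chernoffM_eq_sum_mul_exp hp]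
  exact congrArg _ (sum_obs_prod_prod r fun m v => p m v y * Real.exp (s * llr p m y y' v)).symm

theorem Qweight_eq {π : Fin L → ℝ} (hπ : ∀ y, 0 < π y)
    (hp : ∀ m x y, 0 < p m x y) (r : Fin K → ℕ) (y y' : Fin L) (s : ℝ) (x : Obs 𝒳 r) :
    Qweight p r y y' s x =
      prodLik p r y x * Real.exp (s * LLdiff π p r y y' x) / proxy π p r y y' s := by
  have hratio : (π y' / π y) ^ s ≠ 0 := (Real.rpow_pos_of_pos (div_pos (hπ y') (hπ y)) s).ne'
  rw [prodLik_mul_exp_LLdiff hπ, proxy, mul_div_mul_left _ _ hratio, Qweight]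
  simp only [qTilt, Finset.prod_div_distrib, Finset.prod_const, Finset.card_univ, Fintype.card_fin,
    chernoffM_eq_sum_mul_exp hp]
  congr 1
  exact Finset.prod_congr rfl fun m _ => Finset.prod_congr rfl fun t _ =>
    rpow_one_sub_mul_rpow_eq (hp _ _ _) (hp _ _ _) s

theorem Qexp_LLdiff_eq_logProxySlope [∀ m, Nonempty (𝒳 m)] {π : Fin L → ℝ}
    (hπ : ∀ y, 0 < π y) (hp : ∀ m x y, 0 < p m x y) (r : Fin K → ℕ) (y y' : Fin L) (s : ℝ) :
    Qexp p r y y' s (LLdiff π p r y y') = logProxySlope π p r y y' s := by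
  have hprod : ∀ x : Obs 𝒳 r, 0 < prodLik p r y x := fun x =>
    Finset.prod_pos fun m _ => Finset.prod_pos fun t _ => hp m (x m t) y
  have hderiv := hasDerivAt_log_sum_mul_exp hprod (LLdiff π p r y y') s
  simp only [← proxy_eq_sum_prodLik_mul_exp hπ hp] at hderiv
  rw [← hderiv.unique (hasDerivAt_log_proxy hπ hp r y y' s), Qexp, expTiltMean, Finset.sum_div]
  refine Finset.sum_congr rfl fun x _ => ?_
  rw [Qweight_eq hπ hp, proxy_eq_sum_prodLik_mul_exp hπ hp, div_mul_eq_mul_div]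

theorem expTiltMean_llr_zero_neg (hp : ∀ m x y, 0 < p m x y)
    (hp1 : ∀ m y, ∑ x, p m x y = 1) {m : Fin K} {y y' : Fin L}
    (hm : (fun x => p m x y) ≠ (fun x => p m x y')) :
    expTiltMean (fun x => p m x y) (llr p m y y') 0 < 0 := by
  rw [expTiltMean_zero (hp1 m y)]
  exact sum_mul_log_div_lt_zero (fun x => hp m x y) (fun x => hp m x y') (by rw [hp1, hp1]) hm

theorem expTiltMean_llr_one_pos (hp : ∀ m x y, 0 < p m x y)
    (hp1 : ∀ m y, ∑ x, p m x y = 1) {m : Fin K} {y y' : Fin L}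
    (hm : (fun x => p m x y) ≠ (fun x => p m x y')) :
    0 < expTiltMean (fun x => p m x y) (llr p m y y') 1 := by
  have htilt : ∀ x, p m x y * Real.exp (1 * llr p m y y' x) = p m x y' := fun x => by
    rw [one_mul, llr, Real.exp_log (div_pos (hp m x y') (hp m x y))]
    field_simp [(hp m x y).ne']
  have hgibbs := sum_mul_log_div_lt_zero (fun x => hp m x y') (fun x => hp m x y)
    (by rw [hp1, hp1]) (Ne.symm hm)
  have hrev : ∀ x, llr p m y y' x = -Real.log (p m x y / p m x y') := fun x => by
    rw [llr, ← Real.log_inv, inv_div]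
  simp only [expTiltMean, htilt, hp1, div_one]
  simpa [hrev] using neg_pos.2 hgibbs

theorem expTiltMean_llr_eq_zero {m : Fin K} {y y' : Fin L}
    (hm : (fun x => p m x y) = (fun x => p m x y')) (s : ℝ) :
    expTiltMean (fun x => p m x y) (llr p m y y') s = 0 := by
  have hllr : ∀ x, llr p m y y' x = 0 := fun x => by
    rw [llr, ← congrFun hm x]
    simp
  simp [expTiltMean, hllr]

theorem sum_mul_le_mul_effSample (r : Fin K → ℕ) {y y' : Fin L} {c : Fin K → ℝ} {a : ℝ}
    (hc0 : ∀ m, (fun x => p m x y) = (fun x => p m x y') → c m = 0)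
    (hc : ∀ m, (fun x => p m x y) ≠ (fun x => p m x y') → c m ≤ a) :
    ∑ m, r m * c m ≤ a * effSample p r y y' := by
  rw [effSample, Nat.cast_sum, Finset.mul_sum, Finset.sum_filter]
  refine Finset.sum_le_sum fun m _ => ?_
  split_ifs with hm
  · rw [mul_comm a]
    exact mul_le_mul_of_nonneg_left (hc m hm) (Nat.cast_nonneg _)
  · rw [hc0 m (not_not.mp hm), mul_zero]

theorem mul_effSample_le_sum_mul (r : Fin K → ℕ) {y y' : Fin L} {c : Fin K → ℝ} {a : ℝ}
    (hc0 : ∀ m, (fun x => p m x y) = (fun x => p m x y') → c m = 0)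
    (hc : ∀ m, (fun x => p m x y) ≠ (fun x => p m x y') → a ≤ c m) :
    a * effSample p r y y' ≤ ∑ m, r m * c m := by
  have h := sum_mul_le_mul_effSample (c := fun m => -c m) (a := -a) r
    (fun m hm => by rw [hc0 m hm, neg_zero]) fun m hm => neg_le_neg (hc m hm)
  simp only [mul_neg, Finset.sum_neg_distrib, neg_mul, neg_le_neg_iff] at h
  exact h

theorem mem_Icc_and_Qexp_LLdiff_eq_zero_of_isMinOn [∀ m, Nonempty (𝒳 m)] {π : Fin L → ℝ}
    (hπ : ∀ y, 0 < π y) (hp : ∀ m x y, 0 < p m x y) {r : Fin K → ℕ} {y y' : Fin L}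
    {κ δ : ℝ} (hδ : δ ∈ Ioo (0 : ℝ) (1 / 2))
    (hlow : ∀ m, (fun x => p m x y) ≠ (fun x => p m x y') →
      ∀ s ∈ Icc 0 δ, expTiltMean (fun x => p m x y) (llr p m y y') s ≤ -κ)
    (hhigh : ∀ m, (fun x => p m x y) ≠ (fun x => p m x y') →
      ∀ s ∈ Icc (1 - δ) 1, κ ≤ expTiltMean (fun x => p m x y) (llr p m y y') s)
    (hn : |Real.log (π y' / π y)| < κ * effSample p r y y') {sstar : ℝ}
    (hs : sstar ∈ Icc (0 : ℝ) 1)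
    (hmin : IsMinOn (fun s => Real.log (proxy π p r y y' s)) (Icc (0 : ℝ) 1) sstar) :
    sstar ∈ Icc δ (1 - δ) ∧ Qexp p r y y' sstar (LLdiff π p r y y') = 0 := by
  obtain ⟨hδ0, hδ1⟩ := hδ
  rw [Qexp_LLdiff_eq_logProxySlope hπ hp]
  refine hmin.mem_Icc_and_eq_zero_of_hasDerivAt (hasDerivAt_log_proxy hπ hp r y y') hδ0
    (by linarith) (by linarith) (fun s hs => ?_) (fun s hs => ?_) hs
  · have hsum := sum_mul_le_mul_effSample r (fun m hm => expTiltMean_llr_eq_zero hm s)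
      fun m hm => hlow m hm s hs
    rw [logProxySlope]
    linarith [le_abs_self (Real.log (π y' / π y))]
  · have hsum := mul_effSample_le_sum_mul r (fun m hm => expTiltMean_llr_eq_zero hm s)
      fun m hm => hhigh m hm s hs
    rw [logProxySlope]
    linarith [neg_abs_le (Real.log (π y' / π y))]

theorem exists_pos_lt_expTiltMean_llr_bounds (hp : ∀ m x y, 0 < p m x y)
    (hp1 : ∀ m y, ∑ x, p m x y = 1) :
    ∃ κ > 0, ∀ (y y' : Fin L) (m : Fin K), (fun x => p m x y) ≠ (fun x => p m x y') →
      κ < -expTiltMean (fun x => p m x y) (llr p m y y') 0 ∧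
      κ < expTiltMean (fun x => p m x y) (llr p m y y') 1 := by
  refine (Eventually.and (self_mem_nhdsWithin (a := (0 : ℝ)) (s := Ioi 0))
    (Eventually.filter_mono nhdsWithin_le_nhds ?_)).exists
  exact eventually_all.2 fun y => eventually_all.2 fun y' => eventually_all.2 fun m =>
    eventually_imp_distrib_left.2 fun hm =>
      (eventually_lt_nhds (neg_pos.2 (expTiltMean_llr_zero_neg hp hp1 hm))).and
        (eventually_lt_nhds (expTiltMean_llr_one_pos hp hp1 hm))

theorem exists_uniform_slope_bounds (hp : ∀ m x y, 0 < p m x y)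
    (hp1 : ∀ m y, ∑ x, p m x y = 1) :
    ∃ κ > 0, ∃ δ ∈ Ioo (0 : ℝ) (1 / 2), ∀ (y y' : Fin L) (m : Fin K),
      (fun x => p m x y) ≠ (fun x => p m x y') →
        (∀ s ∈ Icc 0 δ, expTiltMean (fun x => p m x y) (llr p m y y') s ≤ -κ) ∧
        ∀ s ∈ Icc (1 - δ) 1, κ ≤ expTiltMean (fun x => p m x y) (llr p m y y') s := by
  have hcont (y y' : Fin L) (m : Fin K) :
      Continuous (expTiltMean (fun x => p m x y) (llr p m y y')) :=
    have : Nonempty (𝒳 m) := nonempty_of_sum_eq_one (hp1 m y)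
    continuous_expTiltMean (fun x => hp m x y) _
  obtain ⟨κ, hκpos, hκ⟩ := exists_pos_lt_expTiltMean_llr_bounds hp hp1
  have h0 : ∀ᶠ s in 𝓝 (0 : ℝ), ∀ (y y' : Fin L) (m : Fin K),
      (fun x => p m x y) ≠ (fun x => p m x y') →
        expTiltMean (fun x => p m x y) (llr p m y y') s < -κ :=
    eventually_all.2 fun y => eventually_all.2 fun y' => eventually_all.2 fun m =>
      eventually_imp_distrib_left.2 fun hm =>
        ((hcont y y' m).tendsto 0).eventually_lt_const (by linarith [(hκ y y' m hm).1])
  have h1 : ∀ᶠ s in 𝓝 (1 : ℝ), ∀ (y y' : Fin L) (m : Fin K),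
      (fun x => p m x y) ≠ (fun x => p m x y') →
        κ < expTiltMean (fun x => p m x y) (llr p m y y') s :=
    eventually_all.2 fun y => eventually_all.2 fun y' => eventually_all.2 fun m =>
      eventually_imp_distrib_left.2 fun hm =>
        ((hcont y y' m).tendsto 1).eventually_const_lt (hκ y y' m hm).2
  obtain ⟨δ, ⟨hδ0, hδ1, hδhalf⟩, hδpos⟩ :=
    (Eventually.and (Eventually.filter_mono nhdsWithin_le_nhds
      ((eventually_closedBall_subset h0).and ((eventually_closedBall_subset h1).and
        (eventually_lt_nhds (by norm_num : (0 : ℝ) < 1 / 2)))))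
      (self_mem_nhdsWithin (a := (0 : ℝ)) (s := Ioi 0))).exists
  refine ⟨κ, hκpos, δ, ⟨hδpos, hδhalf⟩, fun y y' m hm => ⟨fun s hs => ?_, fun s hs => ?_⟩⟩
  · refine (hδ0 ?_ y y' m hm).le
    rw [Real.closedBall_eq_Icc]
    exact ⟨by linarith [hs.1], by linarith [hs.2]⟩
  · refine (hδ1 ?_ y y' m hm).le
    rw [Real.closedBall_eq_Icc]
    exact ⟨hs.1, by linarith [hs.2]⟩

end Model

theorem interior_minimizers_general
    (π : Fin L → ℝ) (p : ∀ m : Fin K, 𝒳 m → Fin L → ℝ)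
    (hπ : ∀ y, 0 < π y)
    (hp : ∀ (m : Fin K) (x : 𝒳 m) (y : Fin L), 0 < p m x y)
    (hp1 : ∀ (m : Fin K) (y : Fin L), ∑ x : 𝒳 m, p m x y = 1) :
    ∃ δ ∈ Set.Ioo (0 : ℝ) (1/2), ∃ ncen : ℕ,
      ∀ y y' : Fin L, y ≠ y' → ∀ r : Fin K → ℕ, ncen ≤ effSample p r y y' →
        ∀ sstar ∈ Set.Icc (0 : ℝ) 1,
          IsMinOn (fun s => Real.log (proxy π p r y y' s)) (Set.Icc (0 : ℝ) 1) sstar →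
          sstar ∈ Set.Icc δ (1 - δ) ∧
            Qexp p r y y' sstar (LLdiff π p r y y') = 0 := by
  obtain ⟨κ, hκ, δ, hδ, hslope⟩ := exists_uniform_slope_bounds hp hp1
  obtain ⟨ncen, hncen⟩ : ∃ n : ℕ, ∀ y y' : Fin L, |Real.log (π y' / π y)| < κ * n :=
    (eventually_all.2 fun y => eventually_all.2 fun y' =>
      (tendsto_natCast_atTop_atTop.const_mul_atTop hκ).eventually_gt_atTop _).exists
  refine ⟨δ, hδ, ncen, fun y y' _ r hr sstar hs hmin => ?_⟩
  have (m : Fin K) : Nonempty (𝒳 m) := nonempty_of_sum_eq_one (hp1 m y)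
  refine mem_Icc_and_Qexp_LLdiff_eq_zero_of_isMinOn hπ hp hδ (fun m hm => (hslope y y' m hm).1)
    (fun m hm => (hslope y y' m hm).2) ?_ hs hmin
  calc |Real.log (π y' / π y)| < κ * ncen := hncen y y'
    _ ≤ κ * effSample p r y y' := by gcongr

/-- Interior minimizers and centering.
Under pairwise identifiability and uniform boundedness there exist
`δ ∈ (0, 1/2)` and `n_cen ∈ ℕ` such that for all distinct `y ≠ y'` and all plans
`r` with `n_{y,y'}(r) ≥ n_cen`, every minimizer `s*` of
`s ↦ log P̄_{y,y'}(r;s)` over `[0,1]` lies in `[δ, 1-δ]` and satisfies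
`E_{ℚ_{y,y',r,s*}}[Δ_{y,y'}(r)] = 0`. -/
theorem interior_minimizers
    (hL : 2 ≤ L)
    (π : Fin L → ℝ) (p : ∀ m : Fin K, 𝒳 m → Fin L → ℝ)
    (hπ : ∀ y, 0 < π y) (hπ1 : ∑ y, π y = 1)
    (hp : ∀ (m : Fin K) (x : 𝒳 m) (y : Fin L), 0 < p m x y)
    (hp1 : ∀ (m : Fin K) (y : Fin L), ∑ x : 𝒳 m, p m x y = 1)
    (hident : ∀ y y' : Fin L, y ≠ y' → ∃ m, (fun x => p m x y) ≠ (fun x => p m x y'))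
    (B : ℝ)
    (hB : ∀ (m : Fin K) (y y' : Fin L), y ≠ y' →
      ∀ x : 𝒳 m, |Real.log (p m x y' / p m x y)| ≤ B) :
    ∃ δ ∈ Set.Ioo (0 : ℝ) (1/2), ∃ ncen : ℕ,
      ∀ y y' : Fin L, y ≠ y' → ∀ r : Fin K → ℕ, ncen ≤ effSample p r y y' →
        ∀ sstar ∈ Set.Icc (0 : ℝ) 1,
          IsMinOn (fun s => Real.log (proxy π p r y y' s)) (Set.Icc (0 : ℝ) 1) sstar →
          sstar ∈ Set.Icc δ (1 - δ) ∧
            Qexp p r y y' sstar (LLdiff π p r y y') = 0 :=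
  interior_minimizers_general π p hπ hp hp1

end

end MultiLLM
end

section
/- Assume uniform boundedness with constant B. If α_min < (L−1)·π_min/π_max, then every surrogate-feasible query plan r∈ℛ̄(α) satisfies C(r) ≥ (c_min/B) · log( (L−1)·π_min / (π_max·α_min) ), where c_min=min_m c_m, π_min=min_y π(y), and π_max=max_y π(y). -/
open Finset Set
open scoped Classical BigOperators ENNReal

namespace MultiLLM

noncomputable section

variable {L K : ℕ}

variable {𝒳 : Fin K → Type} [∀ m, Fintype (𝒳 m)]

/-! The prior factor of every pairwise Chernoff proxy is at least `π_min/π_max`, and every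
Chernoff factor is at least `e^{-B}`, because `p^{1-s} p'^s = p (p'/p)^s ≥ p e^{-sB} ≥ p e^{-B}`.
So every proxy, and hence its minimum over `s`, is at least `(π_min/π_max) e^{-BN}` with
`N = ∑ r_m`. Feasibility at a label attaining `α_min` then forces
`(L-1)(π_min/π_max) e^{-BN} ≤ α_min`, i.e. `log((L-1)π_min/(π_max α_min)) ≤ BN`; the left side
is positive, so `B > 0`, and `C(r) ≥ c_min N` finishes the proof. -/

lemma le_rpow_of_le_of_le_one {a b s : ℝ} (ha : 0 < a) (ha1 : a ≤ 1) (hab : a ≤ b)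
    (hs : s ∈ Icc (0 : ℝ) 1) : a ≤ b ^ s :=
  calc a = a ^ (1 : ℝ) := (Real.rpow_one a).symm
    _ ≤ a ^ s := Real.rpow_le_rpow_of_exponent_ge ha ha1 hs.2
    _ ≤ b ^ s := Real.rpow_le_rpow ha.le hab hs.1

lemma exp_neg_mul_le_rpow_mul_rpow {a b B s : ℝ} (ha : 0 < a) (hb : 0 < b)
    (hB : |Real.log (b / a)| ≤ B) (hs : s ∈ Icc (0 : ℝ) 1) :
    Real.exp (-B) * a ≤ a ^ (1 - s) * b ^ s := by
  have hratio : Real.exp (-B) ≤ b / a := by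
    rw [← Real.exp_log (div_pos hb ha)]
    exact Real.exp_le_exp.2 (neg_le_of_abs_le hB)
  have hB0 : 0 ≤ B := (abs_nonneg _).trans hB
  have hfactor : a ^ (1 - s) * b ^ s = (b / a) ^ s * a := by
    rw [Real.div_rpow hb.le ha.le, Real.rpow_sub ha, Real.rpow_one]
    field_simp
  rw [hfactor]
  gcongr
  exact le_rpow_of_le_of_le_one (Real.exp_pos _)
    (Real.exp_le_one_iff.2 (neg_nonpos.2 hB0)) hratio hs

lemma log_div_le_of_mul_exp_neg_pow_le {A a B : ℝ} {N : ℕ} (hA : 0 < A) (ha : 0 < a)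
    (h : A * Real.exp (-B) ^ N ≤ a) : Real.log (A / a) ≤ B * N := by
  rw [← Real.exp_nat_mul, mul_neg, Real.exp_neg, ← div_eq_mul_inv,
    div_le_iff₀ (Real.exp_pos _), mul_comm (N : ℝ)] at h
  rw [Real.log_le_iff_le_exp (div_pos hA ha), div_le_iff₀ ha, mul_comm (Real.exp _)]
  exact h

section ChernoffBounds

variable {π : Fin L → ℝ} {p : ∀ m : Fin K, 𝒳 m → Fin L → ℝ} {B a : ℝ}

lemma exp_neg_le_chernoffM {m : Fin K} {y y' : Fin L} {s : ℝ} (hp : ∀ x, 0 < p m x y)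
    (hp' : ∀ x, 0 < p m x y') (hp1 : ∑ x : 𝒳 m, p m x y = 1)
    (hB : ∀ x, |Real.log (p m x y' / p m x y)| ≤ B) (hs : s ∈ Icc (0 : ℝ) 1) :
    Real.exp (-B) ≤ chernoffM p m y y' s :=
  calc Real.exp (-B) = ∑ x : 𝒳 m, Real.exp (-B) * p m x y := by rw [← mul_sum, hp1, mul_one]
    _ ≤ chernoffM p m y y' s :=
      sum_le_sum fun x _ => exp_neg_mul_le_rpow_mul_rpow (hp x) (hp' x) (hB x) hs

lemma mul_exp_neg_pow_le_proxy (hp : ∀ m x y, 0 < p m x y)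
    (hp1 : ∀ m y, ∑ x : 𝒳 m, p m x y = 1)
    (hB : ∀ m y y', y ≠ y' → ∀ x : 𝒳 m, |Real.log (p m x y' / p m x y)| ≤ B)
    (ha : 0 < a) (ha1 : a ≤ 1) (r : Fin K → ℕ) {y y' : Fin L} (hyy' : y ≠ y')
    (hπ : a ≤ π y' / π y) {s : ℝ} (hs : s ∈ Icc (0 : ℝ) 1) :
    a * Real.exp (-B) ^ ∑ m, r m ≤ proxy π p r y y' s := by
  have hprior : a ≤ (π y' / π y) ^ s := le_rpow_of_le_of_le_one ha ha1 hπ hs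
  have hM : ∀ m, Real.exp (-B) ≤ chernoffM p m y y' s := fun m =>
    exp_neg_le_chernoffM (hp m · y) (hp m · y') (hp1 m y) (hB m y y' hyy') hs
  rw [← prod_pow_eq_pow_sum]
  exact mul_le_mul hprior
    (prod_le_prod (fun m _ => by positivity) fun m _ => pow_le_pow_left₀ (by positivity) (hM m) _)
    (by positivity) (ha.le.trans hprior)

lemma mul_exp_neg_pow_le_proxyOpt (hp : ∀ m x y, 0 < p m x y)
    (hp1 : ∀ m y, ∑ x : 𝒳 m, p m x y = 1)
    (hB : ∀ m y y', y ≠ y' → ∀ x : 𝒳 m, |Real.log (p m x y' / p m x y)| ≤ B)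
    (ha : 0 < a) (ha1 : a ≤ 1) (r : Fin K → ℕ) {y y' : Fin L} (hyy' : y ≠ y')
    (hπ : a ≤ π y' / π y) :
    a * Real.exp (-B) ^ ∑ m, r m ≤ proxyOpt π p r y y' :=
  le_csInf ((Set.nonempty_Icc.2 zero_le_one).image _) <| by
    rintro _ ⟨s, hs, rfl⟩
    exact mul_exp_neg_pow_le_proxy hp hp1 hB ha ha1 r hyy' hπ hs

lemma card_sub_one_mul_le_PeBar (hp : ∀ m x y, 0 < p m x y)
    (hp1 : ∀ m y, ∑ x : 𝒳 m, p m x y = 1)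
    (hB : ∀ m y y', y ≠ y' → ∀ x : 𝒳 m, |Real.log (p m x y' / p m x y)| ≤ B)
    (ha : 0 < a) (ha1 : a ≤ 1) (r : Fin K → ℕ) (y : Fin L)
    (hπ : ∀ y', y' ≠ y → a ≤ π y' / π y) :
    ((L : ℝ) - 1) * a * Real.exp (-B) ^ ∑ m, r m ≤ PeBar π p r y := by
  have hcard : ((univ.filter fun y' => y' ≠ y).card : ℝ) = (L : ℝ) - 1 := by
    rw [filter_ne', card_erase_of_mem (mem_univ _), card_univ, Fintype.card_fin,
      Nat.cast_sub y.pos, Nat.cast_one]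
  rw [mul_assoc, ← hcard, ← nsmul_eq_mul]
  exact card_nsmul_le_sum _ _ _ fun y' hy' =>
    mul_exp_neg_pow_le_proxyOpt hp hp1 hB ha ha1 r (mem_filter.1 hy').2.symm
      (hπ y' (mem_filter.1 hy').2)

end ChernoffBounds

lemma mul_sum_le_cost {c : Fin K → ℝ} {cmin : ℝ} (hc : ∀ m, cmin ≤ c m) (r : Fin K → ℕ) :
    cmin * ((∑ m, r m : ℕ) : ℝ) ≤ cost c r := by
  rw [Nat.cast_sum, mul_sum]
  exact sum_le_sum fun m _ => mul_le_mul_of_nonneg_right (hc m) (Nat.cast_nonneg _)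

theorem cost_lower_bound_general
    (π : Fin L → ℝ) (p : ∀ m : Fin K, 𝒳 m → Fin L → ℝ)
    (hπ : ∀ y, 0 < π y)
    (hp : ∀ (m : Fin K) (x : 𝒳 m) (y : Fin L), 0 < p m x y)
    (hp1 : ∀ (m : Fin K) (y : Fin L), ∑ x : 𝒳 m, p m x y = 1)
    (B : ℝ)
    (hB : ∀ (m : Fin K) (y y' : Fin L), y ≠ y' →
      ∀ x : 𝒳 m, |Real.log (p m x y' / p m x y)| ≤ B)
    (c : Fin K → ℝ) (hc : ∀ m, 0 < c m)
    (cmin : ℝ) (hcmin : IsLeast (Set.range c) cmin)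
    (πmax : ℝ) (hπmax : IsGreatest (Set.range π) πmax)
    (πmin : ℝ) (hπmin : IsLeast (Set.range π) πmin)
    (α : Fin L → ℝ) (hα : ∀ y, α y ∈ Set.Ioo (0 : ℝ) 1)
    (amin : ℝ) (hamin : IsLeast (Set.range α) amin)
    (hsmall : amin < ((L : ℝ) - 1) * πmin / πmax) :
    ∀ r ∈ RbarSet π p α,
      cmin / B * Real.log (((L : ℝ) - 1) * πmin / (πmax * amin)) ≤ cost c r := by
  intro r hr
  obtain ⟨y₀, hy₀⟩ := hamin.1
  obtain ⟨m₀, hm₀⟩ := hcmin.1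
  obtain ⟨ymin, hymin⟩ := hπmin.1
  have hamin0 : 0 < amin := hy₀ ▸ (hα y₀).1
  have hπmin0 : 0 < πmin := hymin ▸ hπ ymin
  have hπmin_le : πmin ≤ πmax := hymin ▸ hπmax.2 ⟨ymin, rfl⟩
  have hπmax0 : 0 < πmax := hπmin0.trans_le hπmin_le
  have hratio : ∀ y y', πmin / πmax ≤ π y' / π y := fun y y' =>
    div_le_div₀ (hπ y').le (hπmin.2 ⟨y', rfl⟩) (hπ y) (hπmax.2 ⟨y, rfl⟩)
  have hX : 1 < ((L : ℝ) - 1) * πmin / (πmax * amin) := by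
    rwa [← div_div, one_lt_div hamin0]
  have hfeas : ((L : ℝ) - 1) * (πmin / πmax) * Real.exp (-B) ^ ∑ m, r m ≤ amin :=
    (card_sub_one_mul_le_PeBar hp hp1 hB (div_pos hπmin0 hπmax0)
      ((div_le_one hπmax0).2 hπmin_le) r y₀ fun y' _ => hratio y₀ y').trans
      (hy₀ ▸ hr y₀)
  have hlog : Real.log (((L : ℝ) - 1) * πmin / (πmax * amin)) ≤ B * ∑ m, r m := by
    rw [← mul_div_assoc] at hfeas
    rw [← div_div]
    exact_mod_cast log_div_le_of_mul_exp_neg_pow_le (hamin0.trans hsmall) hamin0 hfeas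
  have hB0 : 0 < B := pos_of_mul_pos_left ((Real.log_pos hX).trans_le hlog) (by positivity)
  calc cmin / B * Real.log (((L : ℝ) - 1) * πmin / (πmax * amin))
      ≤ cmin / B * (B * ∑ m, r m) := by gcongr; exact div_nonneg (hm₀ ▸ (hc m₀).le) hB0.le
    _ = cmin * ((∑ m, r m : ℕ) : ℝ) := by push_cast; field_simp
    _ ≤ cost c r := mul_sum_le_cost (fun m => hcmin.2 ⟨m, rfl⟩) r

/-- Cost lower bound.
Under uniform boundedness with constant `B`, if `α_min < (L-1)·π_min/π_max`
then every surrogate-feasible plan `r ∈ ℛ̄(α)` satisfies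
`C(r) ≥ (c_min/B) · log((L-1)·π_min/(π_max·α_min))`. -/
theorem cost_lower_bound
    (hL : 2 ≤ L)
    (π : Fin L → ℝ) (p : ∀ m : Fin K, 𝒳 m → Fin L → ℝ)
    (hπ : ∀ y, 0 < π y) (hπ1 : ∑ y, π y = 1)
    (hp : ∀ (m : Fin K) (x : 𝒳 m) (y : Fin L), 0 < p m x y)
    (hp1 : ∀ (m : Fin K) (y : Fin L), ∑ x : 𝒳 m, p m x y = 1)
    (B : ℝ)
    (hB : ∀ (m : Fin K) (y y' : Fin L), y ≠ y' →
      ∀ x : 𝒳 m, |Real.log (p m x y' / p m x y)| ≤ B)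
    (c : Fin K → ℝ) (hc : ∀ m, 0 < c m)
    (cmin : ℝ) (hcmin : IsLeast (Set.range c) cmin)
    (πmax : ℝ) (hπmax : IsGreatest (Set.range π) πmax)
    (πmin : ℝ) (hπmin : IsLeast (Set.range π) πmin)
    (α : Fin L → ℝ) (hα : ∀ y, α y ∈ Set.Ioo (0 : ℝ) 1)
    (amin : ℝ) (hamin : IsLeast (Set.range α) amin)
    (hsmall : amin < ((L : ℝ) - 1) * πmin / πmax) :
    ∀ r ∈ RbarSet π p α,
      cmin / B * Real.log (((L : ℝ) - 1) * πmin / (πmax * amin)) ≤ cost c r :=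
  cost_lower_bound_general π p hπ hp hp1 B hB c hc cmin hcmin πmax hπmax πmin hπmin α hα amin hamin
    hsmall

end

end MultiLLM
end
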